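/- The separation profile of the infinite Sierpiński graph S satisfies sep^{1/2}_S(n) ≽ n^{log 2 / log 6}: there exists a constant c > 0 such that for infinitely many n, sep^{1/2}_S(n) ≥ c·n^{log 2 / log 6}. -/

import Mathlib

open scoped Classical

/-- Reachability within the subgraph of `X` induced on a vertex set `s`. -/
def SimpleGraph.ReachIn {V : Type*} (X : SimpleGraph V) (s : Set V) (v w : V) : Prop :=
  ∃ (hv : v ∈ s) (hw : w ∈ s), (X.induce s).Reachable ⟨v, hv⟩ ⟨w, hw⟩

/-- The vertex set of the connected component of `v` in the subgraph of `X` induced on `s`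
(empty if `v ∉ s`). -/
def SimpleGraph.compIn {V : Type*} (X : SimpleGraph V) (s : Set V) (v : V) : Set V :=
  {w | X.ReachIn s v w}

/-- `T` is a vertex set witnessing `cut¹ᐟ²` for the subgraph of `X` induced on the finite
vertex set `G`: after removing `T` from `G`, every connected component has at most
`|G|/2` vertices. -/
def IsHalfCutSet {V : Type*} (X : SimpleGraph V) (G T : Finset V) : Prop :=
  T ⊆ G ∧ ∀ v : V, 2 * (X.compIn (↑(G \ T)) v).ncard ≤ G.card

/-- `cut¹ᐟ²` of the subgraph of `X` induced on the finite vertex set `G`: the least size of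
a vertex set whose removal leaves all connected components of size at most `|G|/2`. -/
noncomputable def cutHalf {V : Type*} (X : SimpleGraph V) (G : Finset V) : ℕ :=
  sInf {t | ∃ T : Finset V, IsHalfCutSet X G T ∧ T.card = t}

/-- The `1/2`-separation profile of `X`, over finite subgraphs with vertex set inside `W`. -/
noncomputable def sepHalf {V : Type*} (X : SimpleGraph V) (W : Set V) (n : ℕ) : ℕ :=
  sSup {c | ∃ G : Finset V, ↑G ⊆ W ∧ G.card ≤ n ∧ c = cutHalf X G}

/-- The `i`-th digit of `x` in base `b`. -/
def digit (b i x : ℕ) : ℕ := x / b ^ i % b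

/-- Membership in the vertex set of the infinite Sierpinski graph: no position at which
both coordinates have base-3 digit `1`. -/
def SierpMem (p : ℕ × ℕ) : Prop :=
  ∀ i : ℕ, ¬(digit 3 i p.1 = 1 ∧ digit 3 i p.2 = 1)

/-- The infinite Sierpinski graph `S`, with edges between valid points at `ℓ¹`-distance 1. -/
def SierpGraph : SimpleGraph (ℕ × ℕ) where
  Adj p q := SierpMem p ∧ SierpMem q ∧ |(p.1 : ℤ) - q.1| + |(p.2 : ℤ) - q.2| = 1
  symm := by
    constructor
    rintro p q ⟨hp, hq, h⟩
    exact ⟨hq, hp, by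
      rw [abs_sub_comm (q.1 : ℤ) (p.1 : ℤ), abs_sub_comm (q.2 : ℤ) (p.2 : ℤ)]; exact h⟩
  loopless := by constructor; rintro p ⟨-, -, h⟩; simp at h

/-- The vertex set of the sphere `Γ_k`. -/
noncomputable def GammaV (k : ℕ) : Finset (ℕ × ℕ) :=
  (Finset.range (3 ^ k) ×ˢ Finset.range (3 ^ k)).filter SierpMem

/-- The intersection of the vertical line `V_x` with `Γ_k`. -/
def VlineSet (k x : ℕ) : Set (ℕ × ℕ) := {p | p ∈ GammaV k ∧ p.1 = x}

/-- The intersection of the horizontal line `H_y` with `Γ_k`. -/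
def HlineSet (k y : ℕ) : Set (ℕ × ℕ) := {p | p ∈ GammaV k ∧ p.2 = y}

/-- The vertical line `V_x` is complete in `Γ_k`: its intersection with `Γ_k` is connected. -/
def CompleteV (k x : ℕ) : Prop := (SierpGraph.induce (VlineSet k x)).Connected

/-- The horizontal line `H_y` is complete in `Γ_k`: its intersection with `Γ_k` is connected. -/
def CompleteH (k y : ℕ) : Prop := (SierpGraph.induce (HlineSet k y)).Connected

/-- The vertex set of the complete-lines subgraph `C_k` of `Γ_k`. -/
noncomputable def CkV (k : ℕ) : Finset (ℕ × ℕ) :=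
  (GammaV k).filter fun p => CompleteV k p.1 ∨ CompleteH k p.2


/-!
The Cantor numbers below `L = 3 ^ k` (no ternary digit `1`) are `M = 2 ^ k` in number, and every
vertical or horizontal line of `[0, L)²` through such a coordinate lies in `S` and is a path. Take
`G` to be the union of these `2M` lines, so `|G| = M(2L - M) ≤ 2 · 6 ^ k`. A set `T` with
`|T| < M / 2` misses more than `M / 2` of the vertical and of the horizontal lines; any untouched
vertical line meets any untouched horizontal one, so the untouched lines lie in one component of
`G - T`, and they cover more than `|G| / 2` points. Hence `cut¹ᐟ²(G) ≥ M / 2`, and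
`M = 6 ^ (k log 2 / log 6)`.
-/

open Finset

lemma digit_three_zero (x : ℕ) : digit 3 0 x = x % 3 := by simp [digit]

lemma digit_three_succ (i x : ℕ) : digit 3 (i + 1) x = digit 3 i (x / 3) := by
  simp [digit, Nat.div_div_eq_div_mul, pow_succ, mul_comm]

noncomputable def cantorNumbers (k : ℕ) : Finset ℕ :=
  (range (3 ^ k)).filter fun x => ∀ i, digit 3 i x ≠ 1

lemma mem_cantorNumbers {k x : ℕ} :
    x ∈ cantorNumbers k ↔ x < 3 ^ k ∧ ∀ i, digit 3 i x ≠ 1 := by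
  simp [cantorNumbers]

lemma mem_cantorNumbers_succ {k x : ℕ} :
    x ∈ cantorNumbers (k + 1) ↔ (x % 3 = 0 ∨ x % 3 = 2) ∧ x / 3 ∈ cantorNumbers k := by
  simp only [mem_cantorNumbers, pow_succ, Nat.div_lt_iff_lt_mul (by norm_num : 0 < 3)]
  constructor
  · rintro ⟨hx, hd⟩
    have h0 := hd 0
    rw [digit_three_zero] at h0
    exact ⟨by omega, hx, fun i => digit_three_succ i x ▸ hd (i + 1)⟩
  · rintro ⟨h0, hx, hd⟩
    refine ⟨hx, fun i => ?_⟩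
    cases i with
    | zero => rw [digit_three_zero]; omega
    | succ i => rw [digit_three_succ]; exact hd i

lemma card_cantorNumbers (k : ℕ) : (cantorNumbers k).card = 2 ^ k := by
  induction k with
  | zero =>
    rw [show cantorNumbers 0 = {0} by ext x; simp +contextual [mem_cantorNumbers, digit]]
    rfl
  | succ k ih =>
    have hbij : (cantorNumbers (k + 1)).card = (({0, 2} : Finset ℕ) ×ˢ cantorNumbers k).card := by
      refine card_nbij' (fun x => (x % 3, x / 3)) (fun p => p.1 + 3 * p.2) ?_ ?_ ?_ ?_
      · intro x hx
        simp only [mem_coe, mem_cantorNumbers_succ, mem_product, mem_insert,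
          mem_singleton] at hx ⊢
        exact hx
      · rintro ⟨d, x⟩ hp
        simp only [mem_coe, mem_product, mem_insert, mem_singleton] at hp
        simp only [mem_coe, mem_cantorNumbers_succ]
        rw [show (d + 3 * x) / 3 = x by omega]
        exact ⟨by omega, hp.2⟩
      · intro x _
        simp only
        omega
      · rintro ⟨d, x⟩ hp
        simp only [mem_coe, mem_product, mem_insert, mem_singleton] at hp
        simp only [Prod.mk.injEq]
        omega
    rw [hbij, card_product, ih, pow_succ]
    simp [mul_comm]

lemma sierpMem_of_fst_mem_cantorNumbers {k x : ℕ} (hx : x ∈ cantorNumbers k) (y : ℕ) :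
    SierpMem (x, y) :=
  fun i hi => (mem_cantorNumbers.1 hx).2 i hi.1

lemma sierpMem_of_snd_mem_cantorNumbers {k y : ℕ} (hy : y ∈ cantorNumbers k) (x : ℕ) :
    SierpMem (x, y) :=
  fun i hi => (mem_cantorNumbers.1 hy).2 i hi.2

lemma sierpGraph_adj_succ_fst {x y : ℕ} (h : SierpMem (x, y)) (h' : SierpMem (x + 1, y)) :
    SierpGraph.Adj (x, y) (x + 1, y) :=
  ⟨h, h', by simp⟩

lemma sierpGraph_adj_succ_snd {x y : ℕ} (h : SierpMem (x, y)) (h' : SierpMem (x, y + 1)) :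
    SierpGraph.Adj (x, y) (x, y + 1) :=
  ⟨h, h', by simp⟩

section ReachIn

variable {V : Type*} {X : SimpleGraph V} {s : Set V} {u v w : V}

lemma SimpleGraph.ReachIn.symm (h : X.ReachIn s v w) : X.ReachIn s w v :=
  let ⟨hv, hw, h⟩ := h
  ⟨hw, hv, h.symm⟩

lemma SimpleGraph.ReachIn.trans (h : X.ReachIn s u v) (h' : X.ReachIn s v w) :
    X.ReachIn s u w :=
  let ⟨hu, _, h⟩ := h
  let ⟨_, hw, h'⟩ := h'
  ⟨hu, hw, h.trans h'⟩

lemma SimpleGraph.compIn_subset (X : SimpleGraph V) (s : Set V) (v : V) : X.compIn s v ⊆ s :=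
  fun _ hw => hw.2.1

lemma SimpleGraph.reachIn_of_path (f : ℕ → V) {L : ℕ} (hmem : ∀ i < L, f i ∈ s)
    (hadj : ∀ i, i + 1 < L → X.Adj (f i) (f (i + 1))) {i j : ℕ} (hi : i < L) (hj : j < L) :
    X.ReachIn s (f i) (f j) := by
  have hzero : ∀ i < L, X.ReachIn s (f 0) (f i) := by
    intro i hi
    induction i with
    | zero => exact ⟨hmem 0 hi, hmem 0 hi, .refl _⟩
    | succ i ih =>
      refine (ih (by omega)).trans ⟨hmem i (by omega), hmem (i + 1) hi, ?_⟩
      exact SimpleGraph.Adj.reachable (by exact hadj i hi)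
  exact (hzero i hi).symm.trans (hzero j hj)

end ReachIn

def lineGrid (L : ℕ) (C R : Finset ℕ) : Finset (ℕ × ℕ) := C ×ˢ range L ∪ range L ×ˢ R

lemma card_lineGrid_add {L : ℕ} {C R : Finset ℕ} (hC : C ⊆ range L) (hR : R ⊆ range L) :
    (lineGrid L C R).card + C.card * R.card = C.card * L + L * R.card := by
  have hinter : C ×ˢ range L ∩ range L ×ˢ R = C ×ˢ R := by
    rw [product_inter_product, inter_eq_left.2 hC, inter_eq_right.2 hR]
  rw [lineGrid, ← card_product, ← hinter, card_union_add_card_inter, card_product, card_product,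
    card_range]

lemma lineGrid_subset_compIn {X : SimpleGraph (ℕ × ℕ)} {s : Set (ℕ × ℕ)} {L x₀ y₀ : ℕ}
    {C R : Finset ℕ} (hC : C ⊆ range L) (hR : R ⊆ range L) (hx₀ : x₀ ∈ C) (hy₀ : y₀ ∈ R)
    (hcol : ∀ x ∈ C, ∀ i < L, ∀ j < L, X.ReachIn s (x, i) (x, j))
    (hrow : ∀ y ∈ R, ∀ i < L, ∀ j < L, X.ReachIn s (i, y) (j, y)) :
    ↑(lineGrid L C R) ⊆ X.compIn s (x₀, y₀) := by
  have hx₀L := mem_range.1 (hC hx₀)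
  have hy₀L := mem_range.1 (hR hy₀)
  rintro ⟨x, y⟩ hp
  simp only [lineGrid, coe_union, coe_product, Set.mem_union, Set.mem_prod, mem_coe,
    mem_range] at hp
  rcases hp with ⟨hx, hy⟩ | ⟨hx, hy⟩
  · exact (hrow y₀ hy₀ x₀ hx₀L x (mem_range.1 (hC hx))).trans (hcol x hx y₀ hy₀L y hy)
  · exact (hcol x₀ hx₀ y₀ hy₀L y (mem_range.1 (hR hy))).trans (hrow y hy x₀ hx₀L x hx)

/-- The lines `V_x` and `H_y` of `Γ_k` with `x`, `y` free of the digit `1`: complete lines of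
the paper's `C_k`, each one a path in `S`. -/
noncomputable def cantorGrid (k : ℕ) : Finset (ℕ × ℕ) :=
  lineGrid (3 ^ k) (cantorNumbers k) (cantorNumbers k)

lemma cantorNumbers_subset_range (k : ℕ) : cantorNumbers k ⊆ range (3 ^ k) :=
  filter_subset _ _

lemma cantorGrid_subset_sierpMem (k : ℕ) : ↑(cantorGrid k) ⊆ {p : ℕ × ℕ | SierpMem p} := by
  rintro ⟨x, y⟩ hp
  simp only [cantorGrid, lineGrid, coe_union, coe_product, Set.mem_union, Set.mem_prod,
    mem_coe] at hp
  rcases hp with ⟨hx, -⟩ | ⟨-, hy⟩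
  · exact sierpMem_of_fst_mem_cantorNumbers hx y
  · exact sierpMem_of_snd_mem_cantorNumbers hy x

lemma card_cantorGrid_le (k : ℕ) : (cantorGrid k).card ≤ 2 * 6 ^ k := by
  have h := card_lineGrid_add (cantorNumbers_subset_range k) (cantorNumbers_subset_range k)
  rw [card_cantorNumbers] at h
  rw [cantorGrid, show 6 ^ k = 2 ^ k * 3 ^ k by rw [← mul_pow]; norm_num]
  nlinarith

lemma IsHalfCutSet.two_mul_card_le {V : Type*} {X : SimpleGraph V} {G T A : Finset V} {v : V}
    (hT : IsHalfCutSet X G T) (hA : ↑A ⊆ X.compIn ↑(G \ T) v) : 2 * A.card ≤ G.card := by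
  refine le_trans ?_ (hT.2 v)
  rw [← Set.ncard_coe_finset]
  exact Nat.mul_le_mul_left 2
    (Set.ncard_le_ncard hA ((G \ T).finite_toSet.subset (X.compIn_subset _ _)))

lemma lineGrid_untouched_subset_compIn {k x₀ y₀ : ℕ} {T : Finset (ℕ × ℕ)}
    (hx₀ : x₀ ∈ cantorNumbers k \ T.image Prod.fst)
    (hy₀ : y₀ ∈ cantorNumbers k \ T.image Prod.snd) :
    ↑(lineGrid (3 ^ k) (cantorNumbers k \ T.image Prod.fst) (cantorNumbers k \ T.image Prod.snd))
      ⊆ SierpGraph.compIn ↑(cantorGrid k \ T) (x₀, y₀) := by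
  have hD := cantorNumbers_subset_range k
  refine lineGrid_subset_compIn (sdiff_subset.trans hD) (sdiff_subset.trans hD) hx₀ hy₀ ?_ ?_
  · intro x hx i hi j hj
    obtain ⟨hxD, hxT⟩ := mem_sdiff.1 hx
    refine SimpleGraph.reachIn_of_path (fun t => (x, t)) (fun t ht => ?_)
      (fun t _ => sierpGraph_adj_succ_snd (sierpMem_of_fst_mem_cantorNumbers hxD t)
        (sierpMem_of_fst_mem_cantorNumbers hxD (t + 1))) hi hj
    refine mem_sdiff.2 ⟨mem_union_left _ (mem_product.2 ⟨hxD, mem_range.2 ht⟩), fun hT => ?_⟩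
    exact hxT (mem_image_of_mem Prod.fst hT)
  · intro y hy i hi j hj
    obtain ⟨hyD, hyT⟩ := mem_sdiff.1 hy
    refine SimpleGraph.reachIn_of_path (fun t => (t, y)) (fun t ht => ?_)
      (fun t _ => sierpGraph_adj_succ_fst (sierpMem_of_snd_mem_cantorNumbers hyD t)
        (sierpMem_of_snd_mem_cantorNumbers hyD (t + 1))) hi hj
    refine mem_sdiff.2 ⟨mem_union_right _ (mem_product.2 ⟨mem_range.2 ht, hyD⟩), fun hT => ?_⟩
    exact hyT (mem_image_of_mem Prod.snd hT)

lemma card_cantorNumbers_le_card_sdiff_image_add (k : ℕ) {α : Type*} (T : Finset α) (f : α → ℕ) :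
    2 ^ k ≤ (cantorNumbers k \ T.image f).card + T.card := by
  have := le_card_sdiff (T.image f) (cantorNumbers k)
  have := card_image_le (s := T) (f := f)
  rw [card_cantorNumbers] at *
  omega

theorem two_pow_le_two_mul_card_of_isHalfCutSet {k : ℕ} {T : Finset (ℕ × ℕ)}
    (hT : IsHalfCutSet SierpGraph (cantorGrid k) T) : 2 ^ k ≤ 2 * T.card := by
  have hC := card_cantorNumbers_le_card_sdiff_image_add k T Prod.fst
  have hR := card_cantorNumbers_le_card_sdiff_image_add k T Prod.snd
  by_contra! hsmall
  obtain ⟨x₀, hx₀⟩ := card_pos.1 (by omega : 0 < (cantorNumbers k \ T.image Prod.fst).card)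
  obtain ⟨y₀, hy₀⟩ := card_pos.1 (by omega : 0 < (cantorNumbers k \ T.image Prod.snd).card)
  -- `convert` matches the classical `DecidableEq` instance inside `IsHalfCutSet` with the
  -- one on `ℕ × ℕ`.
  have hhalf := hT.two_mul_card_le (by convert lineGrid_untouched_subset_compIn hx₀ hy₀)
  have hCD : cantorNumbers k \ T.image Prod.fst ⊆ cantorNumbers k := sdiff_subset
  have hRD : cantorNumbers k \ T.image Prod.snd ⊆ cantorNumbers k := sdiff_subset
  generalize cantorNumbers k \ T.image Prod.fst = C at *
  generalize cantorNumbers k \ T.image Prod.snd = R at *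
  have hD := cantorNumbers_subset_range k
  have hcard := card_lineGrid_add (hCD.trans hD) (hRD.trans hD)
  have hgrid := card_lineGrid_add hD hD
  have hRM := card_le_card hRD
  have hML : (cantorNumbers k).card ≤ 3 ^ k := by simpa using card_le_card hD
  rw [card_cantorNumbers] at hgrid hRM hML
  unfold cantorGrid at hhalf
  -- With `M = 2 ^ k`, `t = |T|` and `|C|, |R| ≥ M - t`, the untouched lines cover at least
  -- `(M - t)(2L - M)` points while the whole grid has `M(2L - M)`.
  nlinarith

section Separation

variable {V : Type*} (X : SimpleGraph V)

lemma SimpleGraph.compIn_empty (v : V) : X.compIn ∅ v = ∅ :=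
  Set.subset_empty_iff.1 (X.compIn_subset ∅ v)

lemma isHalfCutSet_self (G : Finset V) : IsHalfCutSet X G G :=
  ⟨subset_rfl, fun v => by simp [X.compIn_empty]⟩

lemma exists_isHalfCutSet_card_eq_cutHalf (G : Finset V) :
    ∃ T, IsHalfCutSet X G T ∧ T.card = cutHalf X G :=
  Nat.sInf_mem (s := {t | ∃ T, IsHalfCutSet X G T ∧ T.card = t})
    ⟨G.card, G, isHalfCutSet_self X G, rfl⟩

lemma cutHalf_le_card (G : Finset V) : cutHalf X G ≤ G.card :=
  Nat.sInf_le ⟨G, isHalfCutSet_self X G, rfl⟩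

lemma cutHalf_le_sepHalf {W : Set V} {n : ℕ} {G : Finset V} (hGW : ↑G ⊆ W) (hGn : G.card ≤ n) :
    cutHalf X G ≤ sepHalf X W n := by
  refine le_csSup ⟨n, ?_⟩ ⟨G, hGW, hGn, rfl⟩
  rintro _ ⟨G', -, hG'n, rfl⟩
  exact (cutHalf_le_card X G').trans hG'n

end Separation

lemma two_pow_le_two_mul_sepHalf (k : ℕ) :
    2 ^ k ≤ 2 * sepHalf SierpGraph {p : ℕ × ℕ | SierpMem p} (2 * 6 ^ k) := by
  obtain ⟨T, hT, hTcard⟩ := exists_isHalfCutSet_card_eq_cutHalf SierpGraph (cantorGrid k)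
  calc 2 ^ k ≤ 2 * cutHalf SierpGraph (cantorGrid k) :=
        hTcard ▸ two_pow_le_two_mul_card_of_isHalfCutSet hT
    _ ≤ 2 * sepHalf SierpGraph {p : ℕ × ℕ | SierpMem p} (2 * 6 ^ k) :=
        Nat.mul_le_mul_left 2
          (cutHalf_le_sepHalf _ (cantorGrid_subset_sierpMem k) (card_cantorGrid_le k))

open Real in
lemma rpow_log_two_div_log_six_le (k : ℕ) :
    ((2 * 6 ^ k : ℕ) : ℝ) ^ (log 2 / log 6) ≤ 2 * 2 ^ k := by
  have hexp : log 2 / log 6 = logb 6 2 := rfl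
  have hle : logb 6 2 ≤ 1 :=
    (div_le_one (log_pos (by norm_num))).2 (log_le_log (by norm_num) (by norm_num))
  push_cast
  rw [hexp, mul_rpow (by norm_num) (by positivity), ← rpow_pow_comm (by norm_num),
    rpow_logb (by norm_num) (by norm_num) (by norm_num)]
  gcongr
  exact rpow_le_self_of_one_le (by norm_num) hle

/-- Lower bound on the separation profile of the infinite Sierpinski graph:
`sep¹ᐟ²_S(n) ≽ n^(log 2 / log 6)`. -/
theorem sierpinski_sep_lower :
    ∃ c : ℝ, 0 < c ∧ ∀ N : ℕ, ∃ n : ℕ, N ≤ n ∧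
      c * (n : ℝ) ^ (Real.log 2 / Real.log 6) ≤
        (sepHalf SierpGraph {p : ℕ × ℕ | SierpMem p} n : ℝ) := by
  refine ⟨1 / 4, by norm_num, fun N => ⟨2 * 6 ^ N, ?_, ?_⟩⟩
  · have := Nat.lt_pow_self (n := N) (by norm_num : 1 < 6)
    omega
  · have hsep : (2 : ℝ) ^ N ≤ 2 * sepHalf SierpGraph {p : ℕ × ℕ | SierpMem p} (2 * 6 ^ N) := by
      exact_mod_cast two_pow_le_two_mul_sepHalf N
    nlinarith [rpow_log_two_div_log_six_le N]
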